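/- Let v: ℝ → ℝ be smooth and let x ∈ ℝ satisfy v(x) > 0 and v′(x) ≠ 0, and let λ be a real number with λ ≠ 0 and λ < v(x)². Then (1/(12 v(x))) · (1/(2 v(x)(v(x)² − λ))) + (1/(24 v′(x))) · { ∂_x[ 1/(2v(v²−λ)) ] + ∂_x[ (1/(2λ))·( (v²−λ)^{−1/2} − 1/v ) ] + (1/(2λ))·( v·(v²−λ)^{−1/2} − 1 ) · ∂_x[ (v²−λ)^{−1/2} ] } = −1/(16 (v(x)² − λ)²), where ∂_x denotes differentiation in x (with λ fixed) and v = v(x). Equivalently: the function 𝔉₁(v, v_x) = (1/24) log v_x + (1/12) log v, whose partial derivatives are ∂𝔉₁/∂v = 1/(12v) and ∂𝔉₁/∂v_x = 1/(24 v_x), is a solution of the genus-one part of the loop equation of the one-dimensional generalized Frobenius manifold with potential F = v⁴/12. -/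

import Mathlib

/-- The function `F₁(v, vₓ) = (1/24) log vₓ + (1/12) log v`, with partial derivatives
`∂F₁/∂v = 1/(12v)` and `∂F₁/∂vₓ = 1/(24 vₓ)`, solves the genus-one part of the loop
equation of the one-dimensional generalized Frobenius manifold with potential `F = v⁴/12`:
`(∂F₁/∂v) K⁰(x,λ) + (∂F₁/∂vₓ) K¹(x,λ) = −1/(16 (v(x)² − λ)²)`. -/
theorem genus_one_loop_equation (v : ℝ → ℝ) (hv : ContDiff ℝ (⊤ : ℕ∞) v) (x : ℝ)
    (h1 : 0 < v x) (h2 : deriv v x ≠ 0) (lam : ℝ) (h3 : lam ≠ 0)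
    (h4 : lam < (v x) ^ 2) :
    (1 / (12 * v x)) * (1 / (2 * v x * ((v x) ^ 2 - lam)))
      + (1 / (24 * deriv v x)) *
          (deriv (fun y => 1 / (2 * v y * ((v y) ^ 2 - lam))) x
            + deriv (fun y =>
                (1 / (2 * lam)) * (((v y) ^ 2 - lam) ^ (-(1 / 2 : ℝ)) - 1 / v y)) x
            + (1 / (2 * lam)) * (v x * ((v x) ^ 2 - lam) ^ (-(1 / 2 : ℝ)) - 1)
                * deriv (fun y => ((v y) ^ 2 - lam) ^ (-(1 / 2 : ℝ))) x)
      = -1 / (16 * ((v x) ^ 2 - lam) ^ 2) := by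
  have hA : 0 < (v x) ^ 2 - lam := sub_pos.mpr h4
  have hvd : HasDerivAt v (deriv v x) x :=
    ((hv.differentiable (by simp)) x).hasDerivAt
  have hq : HasDerivAt (fun y => (v y) ^ 2 - lam) (2 * v x * deriv v x) x := by
    have := (hvd.pow 2).sub_const lam
    simpa [pow_one] using this
  set r : ℝ := Real.sqrt ((v x) ^ 2 - lam) with hrdef
  have hr2 : r ^ 2 = (v x) ^ 2 - lam := Real.sq_sqrt hA.le
  have hrpos : 0 < r := Real.sqrt_pos.mpr hA
  have e1 : ((v x) ^ 2 - lam) ^ (-(1 / 2 : ℝ)) = r⁻¹ := by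
    rw [Real.rpow_neg hA.le, ← Real.sqrt_eq_rpow]
  have e2 : ((v x) ^ 2 - lam) ^ (-(1 / 2 : ℝ) - 1) = r⁻¹ / ((v x) ^ 2 - lam) := by
    rw [Real.rpow_sub hA, Real.rpow_one, e1]
  -- derivative of the rpow term
  have hs : HasDerivAt (fun y => ((v y) ^ 2 - lam) ^ (-(1 / 2 : ℝ)))
      (-(1 / 2) * (r⁻¹ / ((v x) ^ 2 - lam)) * (2 * v x * deriv v x)) x := by
    have := hq.rpow_const (p := -(1 / 2 : ℝ)) (Or.inl hA.ne')
    rw [e2] at this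
    convert this using 1
    ring
  have d3 : deriv (fun y => ((v y) ^ 2 - lam) ^ (-(1 / 2 : ℝ))) x
      = -(1 / 2) * (r⁻¹ / ((v x) ^ 2 - lam)) * (2 * v x * deriv v x) := hs.deriv
  -- derivative of the first term
  have hg : HasDerivAt (fun y => 2 * v y * ((v y) ^ 2 - lam))
      (2 * deriv v x * ((v x) ^ 2 - lam) + 2 * v x * (2 * v x * deriv v x)) x :=
    (hvd.const_mul 2).mul hq
  have hgne : 2 * v x * ((v x) ^ 2 - lam) ≠ 0 := by positivity
  have d1 : deriv (fun y => 1 / (2 * v y * ((v y) ^ 2 - lam))) x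
      = (0 * (2 * v x * ((v x) ^ 2 - lam)) -
          1 * (2 * deriv v x * ((v x) ^ 2 - lam) + 2 * v x * (2 * v x * deriv v x)))
          / (2 * v x * ((v x) ^ 2 - lam)) ^ 2 :=
    ((hasDerivAt_const x (1 : ℝ)).div hg hgne).deriv
  -- derivative of the second term
  have d2 : deriv (fun y =>
        (1 / (2 * lam)) * (((v y) ^ 2 - lam) ^ (-(1 / 2 : ℝ)) - 1 / v y)) x
      = (1 / (2 * lam)) *
          (-(1 / 2) * (r⁻¹ / ((v x) ^ 2 - lam)) * (2 * v x * deriv v x)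
            - (0 * v x - 1 * deriv v x) / (v x) ^ 2) :=
    ((hs.sub ((hasDerivAt_const x (1 : ℝ)).div hvd h1.ne')).const_mul (1 / (2 * lam))).deriv
  rw [d1, d2, d3, e1, ← hr2]
  have hlam : lam = (v x) ^ 2 - r ^ 2 := by linarith [hr2]
  rw [hlam]
  have hlamne : (v x) ^ 2 - r ^ 2 ≠ 0 := by rw [← hlam]; exact h3
  field_simp
  ring
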